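/- Let f : ℝ⁴ → ℝ be differentiable, fix t, s, and set F(u,v,w) = f(u − t v, s u − s t v − t w, v, s v + w). For u ≠ 0 one has ∂₂f − (1/u)·(∂F/∂s) = −(v/u)·(∂F/∂w), where ∂₂f is evaluated at (u − t v, s u − s t v − t w, v, s v + w) and ∂F/∂s denotes the derivative of f(u − t v, s u − s t v − t w, v, s v + w) with respect to the parameter s. -/

import Mathlib

/-!
Both one-parameter families are affine lines through the same point `p`, with velocities
`(u - t v) e₂ + v e₄` (in `s`) and `-t e₂ + e₄` (in `w`). By the chain rule both derivatives are
values of the linear map `Df(p)`, and the identity reduces to linear algebra in `Df(p) e₂`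
and `Df(p) e₄`, dividing by `u`.
-/

theorem deriv_comp_affine_eq_fderiv {𝕜 E F : Type*} [NontriviallyNormedField 𝕜]
    [NormedAddCommGroup E] [NormedSpace 𝕜 E] [NormedAddCommGroup F] [NormedSpace 𝕜 F]
    {f : E → F} {γ : 𝕜 → E} {x d : E} {r : 𝕜} (hγ : ∀ r', γ r' = x + (r' - r) • d)
    (hf : DifferentiableAt 𝕜 f x) :
    deriv (fun r' => f (γ r')) r = fderiv 𝕜 f x d := by
  have hline : HasDerivAt γ d r := by
    rw [funext hγ]
    simpa using (((hasDerivAt_id r).sub_const r).smul_const d).const_add x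
  have hx : x = γ r := by simp [hγ]
  exact (hf.hasFDerivAt.comp_hasDerivAt_of_eq r hline hx).deriv

theorem stmt5 (f : ℝ × ℝ × ℝ × ℝ → ℝ) (hf : Differentiable ℝ f)
    (t s u v w : ℝ) (hu : u ≠ 0) :
    fderiv ℝ f (u - t*v, s*u - s*t*v - t*w, v, s*v + w) (0,1,0,0)
      - (1/u) * deriv (fun s' : ℝ => f (u - t*v, s'*u - s'*t*v - t*w, v, s'*v + w)) s =
    -(v/u) * deriv (fun w' : ℝ => f (u - t*v, s*u - s*t*v - t*w', v, s*v + w')) w := by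
  set p : ℝ × ℝ × ℝ × ℝ := (u - t*v, s*u - s*t*v - t*w, v, s*v + w)
  set e₂ : ℝ × ℝ × ℝ × ℝ := (0, 1, 0, 0)
  set e₄ : ℝ × ℝ × ℝ × ℝ := (0, 0, 0, 1)
  rw [deriv_comp_affine_eq_fderiv (x := p) (d := (u - t*v) • e₂ + v • e₄) _ (hf p),
    deriv_comp_affine_eq_fderiv (x := p) (d := (-t) • e₂ + (1 : ℝ) • e₄) _ (hf p)]
  · simp only [map_add, map_smul, smul_eq_mul]
    field_simp
    ring
  all_goals
    intro r
    ext <;> simp only [p, e₂, e₄, Prod.fst_add, Prod.snd_add, Prod.smul_fst, Prod.smul_snd,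
      smul_eq_mul] <;> ring
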